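/- arXiv:math/0012026 — 4 statements merged into one kernel-verified Lean document; each statement's English description precedes it below -/
import Mathlib

section
/- Lemma 2.2 (pointwise exponential bound from the product representation). Let d > 4 and γ, δ ∈ (0,1). There exists a constant C = C(d,γ,δ) > 0 such that the following holds for all β > 0, K₂, K₃ > 0 with (K₂+K₃)β sufficiently small. Let j ≥ 1, let a ∈ [0, γ j^{-1} log j] (with a = 0 if j = 1), let (v_i)_{i=0}^{j} be real numbers with v₀ = 1 and |v_i - v_{i-1}| ≤ K₂β i^{-(d-2)/2} for 1 ≤ i ≤ j, and let r_1,…,r_j be real numbers with |r_i| ≤ K₃β i^{-(d-2)/2} + K₃β a i^{-δ} for each i. Then |∏_{i=1}^{j} (1 - v_i a + r_i)| ≤ e^{CK₃β} e^{-(1 - C(K₂+K₃)β) j a}. -/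
noncomputable section
open Real Finset

private lemma rpow_neg_three_half_eq {x : ℝ} (hx : 0 < x) :
    x ^ (-(3:ℝ)/2) = 1 / (x * Real.sqrt x) := by
  have h32 : x ^ ((3:ℝ)/2) = x * Real.sqrt x := by
    have : ((3:ℝ)/2) = 1 + 1/2 := by norm_num
    rw [this, Real.rpow_add hx, Real.rpow_one, ← Real.sqrt_eq_rpow]
  have hneg : (-(3:ℝ)/2) = -((3:ℝ)/2) := by ring
  rw [hneg, Real.rpow_neg hx.le, h32, one_div]

private lemma key_step (n : ℕ) (hn : 1 ≤ n) :
    (((n:ℝ)+1)) ^ (-(3:ℝ)/2) ≤ 2 / Real.sqrt n - 2 / Real.sqrt ((n:ℝ)+1) := by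
  have hn1 : (1:ℝ) ≤ (n:ℝ) := by exact_mod_cast hn
  have hs1 : 1 ≤ Real.sqrt n := Real.one_le_sqrt.2 hn1
  have ht1 : 1 ≤ Real.sqrt ((n:ℝ)+1) := Real.one_le_sqrt.2 (by linarith)
  set s := Real.sqrt n
  set t := Real.sqrt ((n:ℝ)+1)
  have hs0 : 0 < s := by linarith
  have ht0 : 0 < t := by linarith
  have hs2 : s ^ 2 = (n:ℝ) := Real.sq_sqrt (by linarith)
  have ht2 : t ^ 2 = (n:ℝ) + 1 := Real.sq_sqrt (by linarith)
  have hst : s ≤ t := Real.sqrt_le_sqrt (by linarith)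
  have heq : (((n:ℝ)+1)) ^ (-(3:ℝ)/2) = 1 / (((n:ℝ)+1) * t) :=
    rpow_neg_three_half_eq (by linarith)
  rw [heq]
  rw [div_sub_div _ _ (ne_of_gt hs0) (ne_of_gt ht0), div_le_div_iff₀ (by nlinarith) (by positivity)]
  have h1 : (t - s) * (t + s) = 1 := by nlinarith
  nlinarith [mul_nonneg (mul_nonneg ht0.le (sub_nonneg.2 hst)) (by positivity : (0:ℝ) ≤ 2*t+s),
    mul_pos ht0 ht0, mul_pos hs0 ht0, sq_nonneg (t-s)]

private lemma sum_rpow_aux : ∀ j : ℕ, 1 ≤ j →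
    ∑ i ∈ Finset.Icc 1 j, ((i:ℝ)) ^ (-(3:ℝ)/2) ≤ 3 - 2 / Real.sqrt j := by
  intro j hj
  induction j, hj using Nat.le_induction with
  | base => simp [Real.one_rpow]; norm_num
  | succ n hn ih =>
    rw [Finset.sum_Icc_succ_top (by omega : 1 ≤ n + 1)]
    have hk := key_step n hn
    push_cast
    push_cast at ih hk
    linarith

private lemma sum_rpow_le (j : ℕ) : ∑ i ∈ Finset.Icc 1 j, ((i:ℝ)) ^ (-(3:ℝ)/2) ≤ 3 := by
  rcases Nat.eq_zero_or_pos j with h | h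
  · simp [h]
  · have := sum_rpow_aux j h
    have h2 : 0 ≤ 2 / Real.sqrt j := by positivity
    linarith

set_option maxHeartbeats 1000000 in
/-- **Lemma 2.2** (pointwise exponential bound from the product representation):
there is `C = C(d,γ,δ)` such that, for `(K₂+K₃)β` sufficiently small, if
`0 ≤ a ≤ γ j⁻¹ log j`, `v₀ = 1`, `|v_i - v_{i-1}| ≤ K₂β i^{-(d-2)/2}` and
`|r_i| ≤ K₃β i^{-(d-2)/2} + K₃β a i^{-δ}` for `1 ≤ i ≤ j`, then
`|∏_{i=1}^j (1 - v_i a + r_i)| ≤ e^{CK₃β} e^{-(1-C(K₂+K₃)β) j a}`. -/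
theorem product_exponential_bound (d : ℕ) (hd : 4 < d) (γ δ : ℝ)
    (hγ : γ ∈ Set.Ioo (0:ℝ) 1) (hδ : δ ∈ Set.Ioo (0:ℝ) 1) :
    ∃ C > (0:ℝ), ∃ β₀ > (0:ℝ), ∀ β K₂ K₃ : ℝ, 0 < β → 0 < K₂ → 0 < K₃ →
      (K₂ + K₃) * β ≤ β₀ →
      ∀ j : ℕ, 1 ≤ j → ∀ a : ℝ, 0 ≤ a → a ≤ γ * (j:ℝ)⁻¹ * Real.log j →
      ∀ v : ℕ → ℝ, v 0 = 1 →
        (∀ i : ℕ, 1 ≤ i → i ≤ j → |v i - v (i-1)| ≤ K₂ * β * (i:ℝ) ^ (-((d:ℝ)-2)/2)) →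
      ∀ r : ℕ → ℝ,
        (∀ i : ℕ, 1 ≤ i → i ≤ j →
          |r i| ≤ K₃ * β * (i:ℝ) ^ (-((d:ℝ)-2)/2) + K₃ * β * a * (i:ℝ) ^ (-δ)) →
      |∏ i ∈ Finset.Icc 1 j, (1 - v i * a + r i)| ≤
        Real.exp (C * K₃ * β) * Real.exp (-(1 - C * (K₂ + K₃) * β) * (j:ℝ) * a) := by
  refine ⟨3, by norm_num, 1/100, by norm_num, ?_⟩
  intro β K₂ K₃ hβ hK₂ hK₃ hsmall j hj a ha0 haj v hv0 hv r hr
  have hd5 : (5:ℝ) ≤ (d:ℝ) := by exact_mod_cast hd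
  have hexp_le : -((d:ℝ)-2)/2 ≤ -(3:ℝ)/2 := by linarith
  have hexp_np : -((d:ℝ)-2)/2 ≤ 0 := by linarith
  have hK2b0 : 0 ≤ K₂ * β := by positivity
  have hK3b0 : 0 ≤ K₃ * β := by positivity
  have hK2b : K₂ * β ≤ 1/100 := by nlinarith
  have hK3b : K₃ * β ≤ 1/100 := by nlinarith
  have hj1 : (1:ℝ) ≤ (j:ℝ) := by exact_mod_cast hj
  have hj0 : (0:ℝ) < (j:ℝ) := by linarith
  -- a ≤ 1/2
  have ha12 : a ≤ 1/2 := by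
    have he1 : (0:ℝ) < Real.exp 1 := Real.exp_pos 1
    have he2 : (2:ℝ) ≤ Real.exp 1 := by
      have := Real.add_one_le_exp (1:ℝ); linarith
    have hlog : Real.log ((j:ℝ)/Real.exp 1) = Real.log j - 1 := by
      rw [Real.log_div (by positivity) (by positivity), Real.log_exp]
    have h2 := Real.log_le_sub_one_of_pos (show (0:ℝ) < (j:ℝ)/Real.exp 1 by positivity)
    rw [hlog] at h2
    have hlogj : Real.log j ≤ (j:ℝ)/Real.exp 1 := by linarith
    have hlognn : 0 ≤ Real.log j := Real.log_nonneg hj1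
    have hstep : γ * (j:ℝ)⁻¹ * Real.log j ≤ (j:ℝ)⁻¹ * Real.log j := by
      have : (0:ℝ) ≤ (j:ℝ)⁻¹ * Real.log j := by positivity
      nlinarith [hγ.1, hγ.2]
    have hstep2 : (j:ℝ)⁻¹ * Real.log j ≤ (j:ℝ)⁻¹ * ((j:ℝ)/Real.exp 1) := by
      have : (0:ℝ) ≤ (j:ℝ)⁻¹ := by positivity
      nlinarith
    have heq : (j:ℝ)⁻¹ * ((j:ℝ)/Real.exp 1) = 1/Real.exp 1 := by
      field_simp
    have : (1:ℝ)/Real.exp 1 ≤ 1/2 := by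
      rw [div_le_div_iff₀ he1 (by norm_num)]; linarith
    linarith
  -- bound on v
  have hvb : ∀ i : ℕ, i ≤ j → |v i - 1| ≤ 3 * (K₂ * β) := by
    have key : ∀ i : ℕ, i ≤ j →
        |v i - 1| ≤ K₂ * β * ∑ k ∈ Finset.Icc 1 i, ((k:ℝ)) ^ (-(3:ℝ)/2) := by
      intro i
      induction i with
      | zero => intro _; simp [hv0]
      | succ n ih =>
        intro hle
        have hn : n ≤ j := by omega
        have h1 := hv (n+1) (by omega) hle
        have hcast : ((n+1 : ℕ):ℝ) = (n:ℝ)+1 := by push_cast; ring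
        have h1' : |v (n+1) - v n| ≤ K₂ * β * ((n+1:ℕ):ℝ) ^ (-((d:ℝ)-2)/2) := by
          simpa using h1
        have hpow : ((n+1:ℕ):ℝ) ^ (-((d:ℝ)-2)/2) ≤ ((n+1:ℕ):ℝ) ^ (-(3:ℝ)/2) :=
          Real.rpow_le_rpow_of_exponent_le (by exact_mod_cast Nat.one_le_iff_ne_zero.2 (by omega)) hexp_le
        have h2 : |v (n+1) - v n| ≤ K₂ * β * ((n+1:ℕ):ℝ) ^ (-(3:ℝ)/2) := by
          calc |v (n+1) - v n| ≤ K₂ * β * ((n+1:ℕ):ℝ) ^ (-((d:ℝ)-2)/2) := h1'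
            _ ≤ K₂ * β * ((n+1:ℕ):ℝ) ^ (-(3:ℝ)/2) := by
              exact mul_le_mul_of_nonneg_left hpow hK2b0
        have h3 : |v (n+1) - 1| ≤ |v (n+1) - v n| + |v n - 1| := by
          calc |v (n+1) - 1| = |(v (n+1) - v n) + (v n - 1)| := by ring_nf
            _ ≤ |v (n+1) - v n| + |v n - 1| := abs_add_le _ _
        rw [Finset.sum_Icc_succ_top (by omega : 1 ≤ n + 1)]
        have := ih hn
        calc |v (n+1) - 1| ≤ |v (n+1) - v n| + |v n - 1| := h3
          _ ≤ K₂ * β * ((n+1:ℕ):ℝ) ^ (-(3:ℝ)/2) +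
              K₂ * β * ∑ k ∈ Finset.Icc 1 n, ((k:ℝ)) ^ (-(3:ℝ)/2) := by
            exact add_le_add h2 this
          _ = K₂ * β * ((∑ k ∈ Finset.Icc 1 n, ((k:ℝ)) ^ (-(3:ℝ)/2)) +
              ((n+1:ℕ):ℝ) ^ (-(3:ℝ)/2)) := by push_cast; ring
    intro i hi
    have h1 := key i hi
    have h2 := sum_rpow_le i
    nlinarith
  -- per-factor facts
  have hfac : ∀ i ∈ Finset.Icc 1 j,
      0 ≤ 1 - v i * a + r i ∧ 1 - v i * a + r i ≤ Real.exp (-(v i * a) + r i) := by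
    intro i hi
    rw [Finset.mem_Icc] at hi
    have hi1 : (1:ℝ) ≤ (i:ℝ) := by exact_mod_cast hi.1
    have hvi := hvb i hi.2
    rw [abs_le] at hvi
    have hp1 : ((i:ℝ)) ^ (-((d:ℝ)-2)/2) ≤ 1 :=
      Real.rpow_le_one_of_one_le_of_nonpos hi1 hexp_np
    have hp2 : ((i:ℝ)) ^ (-δ) ≤ 1 :=
      Real.rpow_le_one_of_one_le_of_nonpos hi1 (by linarith [hδ.1])
    have hri := hr i hi.1 hi.2
    have hri' : |r i| ≤ K₃ * β + K₃ * β * a := by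
      have hb1 : K₃ * β * ((i:ℝ)) ^ (-((d:ℝ)-2)/2) ≤ K₃ * β * 1 :=
        mul_le_mul_of_nonneg_left hp1 hK3b0
      have hb2 : K₃ * β * a * ((i:ℝ)) ^ (-δ) ≤ K₃ * β * a * 1 :=
        mul_le_mul_of_nonneg_left hp2 (by positivity)
      calc |r i| ≤ _ := hri
        _ ≤ K₃ * β * 1 + K₃ * β * a * 1 := add_le_add hb1 hb2
        _ = K₃ * β + K₃ * β * a := by ring
    rw [abs_le] at hri'
    have hva : v i * a ≤ (1 + 3 * (K₂ * β)) * a :=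
      mul_le_mul_of_nonneg_right (by linarith) ha0
    constructor
    · have h1 : (1 + 3*(K₂*β))*a ≤ 103/200 := by nlinarith
      have h2 : K₃*β*a ≤ 1/200 := by nlinarith
      linarith
    · have := Real.add_one_le_exp (-(v i * a) + r i)
      linarith
  have hnn : ∀ i ∈ Finset.Icc 1 j, 0 ≤ 1 - v i * a + r i := fun i hi => (hfac i hi).1
  have habs : |∏ i ∈ Finset.Icc 1 j, (1 - v i * a + r i)| =
      ∏ i ∈ Finset.Icc 1 j, (1 - v i * a + r i) :=
    abs_of_nonneg (Finset.prod_nonneg hnn)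
  rw [habs, ← Real.exp_add]
  have hprodle : ∏ i ∈ Finset.Icc 1 j, (1 - v i * a + r i) ≤
      ∏ i ∈ Finset.Icc 1 j, Real.exp (-(v i * a) + r i) :=
    Finset.prod_le_prod hnn (fun i hi => (hfac i hi).2)
  rw [← Real.exp_sum] at hprodle
  refine hprodle.trans (Real.exp_le_exp.2 ?_)
  -- sum bound
  have hterm : ∀ i ∈ Finset.Icc 1 j, -(v i * a) + r i ≤
      ((-(1 - 3*(K₂*β)))*a + K₃ * β * a) + K₃ * β * ((i:ℝ)) ^ (-(3:ℝ)/2) := by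
    intro i hi
    rw [Finset.mem_Icc] at hi
    have hi1 : (1:ℝ) ≤ (i:ℝ) := by exact_mod_cast hi.1
    have hvi := hvb i hi.2
    rw [abs_le] at hvi
    have hva : (1 - 3*(K₂*β)) * a ≤ v i * a :=
      mul_le_mul_of_nonneg_right (by linarith) ha0
    have hp1 : ((i:ℝ)) ^ (-((d:ℝ)-2)/2) ≤ ((i:ℝ)) ^ (-(3:ℝ)/2) :=
      Real.rpow_le_rpow_of_exponent_le hi1 hexp_le
    have hp2 : ((i:ℝ)) ^ (-δ) ≤ 1 :=
      Real.rpow_le_one_of_one_le_of_nonpos hi1 (by linarith [hδ.1])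
    have hri := hr i hi.1 hi.2
    have hri' : r i ≤ K₃ * β * ((i:ℝ)) ^ (-(3:ℝ)/2) + K₃ * β * a := by
      have hb1 : K₃ * β * ((i:ℝ)) ^ (-((d:ℝ)-2)/2) ≤ K₃ * β * ((i:ℝ)) ^ (-(3:ℝ)/2) :=
        mul_le_mul_of_nonneg_left hp1 hK3b0
      have hb2 : K₃ * β * a * ((i:ℝ)) ^ (-δ) ≤ K₃ * β * a * 1 :=
        mul_le_mul_of_nonneg_left hp2 (by positivity)
      calc r i ≤ |r i| := le_abs_self _
        _ ≤ _ := hri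
        _ ≤ K₃ * β * ((i:ℝ)) ^ (-(3:ℝ)/2) + K₃ * β * a * 1 := add_le_add hb1 hb2
        _ = K₃ * β * ((i:ℝ)) ^ (-(3:ℝ)/2) + K₃ * β * a := by ring
    linarith
  have hsum1 := Finset.sum_le_sum hterm
  refine hsum1.trans ?_
  rw [Finset.sum_add_distrib, ← Finset.mul_sum, Finset.sum_const, Nat.card_Icc]
  have hcard : (j + 1 - 1) = j := by omega
  rw [hcard, nsmul_eq_mul]
  have hS0 : 0 ≤ ∑ i ∈ Finset.Icc 1 j, ((i:ℝ)) ^ (-(3:ℝ)/2) :=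
    Finset.sum_nonneg fun i _ => Real.rpow_nonneg (Nat.cast_nonneg i) _
  have hS3 := sum_rpow_le j
  have hja0 : 0 ≤ (j:ℝ) * a := by positivity
  nlinarith [mul_nonneg hK3b0 hja0, mul_nonneg hK2b0 hja0]
end
end

section
/- Lemma 3.1 (bound on ζ_{n+1}). Suppose that |z_j - z_{j-1}| ≤ K₁β j^{-d/2} for all 1 ≤ j ≤ n+1 (induction hypothesis (H1) advanced to n+1), that each g_m(0;·) is differentiable in z on I_n with |∂_z g_m(0;y)| ≤ K₄'β m^{-(d-2)/2} for all y ∈ I_n and 2 ≤ m ≤ n+1, and that β is sufficiently small (depending on d and K₄'). Then for every z ∈ I_{n+1}, |ζ_{n+1}(z)| ≤ C K₁ β (n+1)^{-(d-2)/2}, where ζ_{n+1}(z) = z - 1 + Σ_{m=2}^{n+1} g_m(0;z) and C = C(d) is a constant. -/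
noncomputable section
open Real Finset

namespace Lace31

/-- The sequence `z_n`: `z₀ = z₁ = 1`, `z_{n+1} = 1 - Σ_{m=2}^{n+1} g_m(0;z_n)`,
where `g m` stands for `g_m(0;·)`. -/
def zs (g : ℕ → ℝ → ℝ) : ℕ → ℝ
  | 0 => 1
  | 1 => 1
  | n + 2 => 1 - ∑ m ∈ Finset.Icc 2 (n + 2), g m (zs g (n + 1))

/-- The interval `I_j`. -/
def Iset (d : ℕ) (g : ℕ → ℝ → ℝ) (K₁ β : ℝ) (j : ℕ) : Set ℝ :=
  Set.Icc (zs g j - K₁ * β * (j:ℝ) ^ (-((d:ℝ)-2)/2))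
    (zs g j + K₁ * β * (j:ℝ) ^ (-((d:ℝ)-2)/2))

/-- `ζ_{n+1}(z) = z - 1 + Σ_{m=2}^{n+1} g_m(0;z)`. -/
def zeta (g : ℕ → ℝ → ℝ) (n : ℕ) (z : ℝ) : ℝ :=
  z - 1 + ∑ m ∈ Finset.Icc 2 (n + 1), g m z

lemma sqrt_core {a : ℝ} (ha : 1 ≤ a) :
    (a+1) ^ (-(3/2) : ℝ) ≤ 2 * (a ^ (-(1/2) : ℝ) - (a+1) ^ (-(1/2) : ℝ)) := by
  have ha0 : (0:ℝ) < a := by linarith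
  have hb0 : (0:ℝ) < a + 1 := by linarith
  set s := Real.sqrt a with hs
  set t := Real.sqrt (a+1) with ht
  have hs0 : 0 < s := Real.sqrt_pos.mpr ha0
  have ht0 : 0 < t := Real.sqrt_pos.mpr hb0
  have hs2 : s^2 = a := Real.sq_sqrt ha0.le
  have ht2 : t^2 = a + 1 := Real.sq_sqrt hb0.le
  have hst : s ≤ t := Real.sqrt_le_sqrt (by linarith)
  have e1 : a ^ (-(1/2) : ℝ) = s⁻¹ := by
    rw [Real.rpow_neg ha0.le, ← Real.sqrt_eq_rpow]
  have e2 : (a+1) ^ (-(1/2) : ℝ) = t⁻¹ := by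
    rw [Real.rpow_neg hb0.le, ← Real.sqrt_eq_rpow]
  have e3 : (a+1) ^ (-(3/2) : ℝ) = ((a+1) * t)⁻¹ := by
    rw [Real.rpow_neg hb0.le]
    congr 1
    have : (3/2 : ℝ) = 1 + 1/2 := by norm_num
    rw [this, Real.rpow_add hb0, Real.rpow_one, ← Real.sqrt_eq_rpow]
  rw [e1, e2, e3, ← ht2]
  have key : (t + s) * (s * t) ≤ 2 * (t^2 * t) := by nlinarith
  have hts : (t - s) * (t + s) = 1 := by nlinarith
  have e4 : s⁻¹ - t⁻¹ = (t - s) / (s * t) := by field_simp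
  have e5 : t - s = 1 / (t + s) := by
    rw [eq_div_iff (by positivity)]; exact hts
  rw [e4, e5, inv_eq_one_div, div_div, mul_one_div,
    div_le_div_iff₀ (by positivity) (by positivity)]
  calc 1 * ((t + s) * (s * t)) = (t + s) * (s * t) := by ring
    _ ≤ 2 * (t^2 * t) := key

lemma tele {p : ℝ} (hp : 3/2 ≤ p) :
    ∀ N : ℕ, ∑ m ∈ Icc 2 N, ((m:ℝ)) ^ (-p) ≤ 2 := by
  have main : ∀ N : ℕ, 1 ≤ N →
      ∑ m ∈ Icc 2 N, ((m:ℝ)) ^ (-(3/2) : ℝ) ≤ 2 - 2 * ((N:ℝ)) ^ (-(1/2) : ℝ) := by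
    intro N hN
    induction N, hN using Nat.le_induction with
    | base => simp
    | succ N hN ih =>
      rw [Finset.sum_Icc_succ_top (by omega)]
      have h1 : ((N:ℝ) + 1) ^ (-(3/2) : ℝ) ≤
          2 * ((N:ℝ) ^ (-(1/2) : ℝ) - ((N:ℝ)+1) ^ (-(1/2) : ℝ)) :=
        sqrt_core (by exact_mod_cast hN)
      push_cast
      linarith
  intro N
  have h2 : ∑ m ∈ Icc 2 N, ((m:ℝ)) ^ (-p) ≤ ∑ m ∈ Icc 2 N, ((m:ℝ)) ^ (-(3/2) : ℝ) := by
    apply Finset.sum_le_sum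
    intro m hm
    have hm2 : 2 ≤ m := (Finset.mem_Icc.mp hm).1
    exact Real.rpow_le_rpow_of_exponent_le (by exact_mod_cast Nat.one_le_of_lt hm2)
      (by linarith)
  rcases Nat.lt_or_ge N 2 with h | h
  · interval_cases N <;> simp_all
  · have h3 := main N (by omega)
    have h4 : (0:ℝ) ≤ ((N:ℝ)) ^ (-(1/2) : ℝ) := by positivity
    linarith

lemma nest {d : ℕ} (hd : 4 < d) {n : ℕ} (hn : 1 ≤ n) :
    ((n:ℝ)+1) ^ (-((d:ℝ)-2)/2) + ((n:ℝ)+1) ^ (-(d:ℝ)/2) ≤ (n:ℝ) ^ (-((d:ℝ)-2)/2) := by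
  set p : ℝ := ((d:ℝ)-2)/2 with hpdef
  have hd5 : (5:ℝ) ≤ (d:ℝ) := by exact_mod_cast hd
  have hp1 : 1 ≤ p := by rw [hpdef]; linarith
  have ha1 : (1:ℝ) ≤ (n:ℝ) := by exact_mod_cast hn
  have ha0 : (0:ℝ) < (n:ℝ) := by linarith
  set a : ℝ := (n:ℝ)
  have hb0 : (0:ℝ) < a + 1 := by linarith
  have ep1 : (-((d:ℝ)-2)/2) = -p := by rw [hpdef]; ring
  have ep2 : (-(d:ℝ)/2) = -p + (-1) := by rw [hpdef]; ring
  rw [ep1, ep2, Real.rpow_add hb0, Real.rpow_neg_one]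
  have hfac : (a+1)^(-p) + (a+1)^(-p) * (a+1)⁻¹ = (a+1)^(-p) * (1 + (a+1)⁻¹) := by ring
  rw [hfac]
  have h1 : 1 + (a+1)⁻¹ ≤ (a+1)/a := by
    rw [le_div_iff₀ ha0]
    have : (a+1)⁻¹ * a ≤ 1 := by
      rw [inv_mul_le_iff₀ hb0]; linarith
    nlinarith
  have h2 : (a+1)/a ≤ ((a+1)/a) ^ p := by
    calc (a+1)/a = ((a+1)/a) ^ (1:ℝ) := (Real.rpow_one _).symm
      _ ≤ ((a+1)/a) ^ p := Real.rpow_le_rpow_of_exponent_le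
          (by rw [le_div_iff₀ ha0]; linarith) hp1
  have h3 : (a+1)^(-p) * (((a+1)/a) ^ p) = a ^ (-p) := by
    rw [Real.div_rpow hb0.le ha0.le, Real.rpow_neg hb0.le, Real.rpow_neg ha0.le]
    field_simp
  calc (a+1)^(-p) * (1 + (a+1)⁻¹) ≤ (a+1)^(-p) * (((a+1)/a) ^ p) := by
        apply mul_le_mul_of_nonneg_left (le_trans h1 h2) (by positivity)
    _ = a ^ (-p) := h3

/-- **Lemma 3.1** (bound on `ζ_{n+1}`): if (H1) holds up to `n+1`, each `g_m(0;·)`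
is differentiable on `I_n` with `|∂_z g_m(0;y)| ≤ K₄'β m^{-(d-2)/2}` there
(`2 ≤ m ≤ n+1`), and `β` is sufficiently small (depending on `d` and `K₄'`), then
for every `z ∈ I_{n+1}`, `|ζ_{n+1}(z)| ≤ C K₁ β (n+1)^{-(d-2)/2}` with `C = C(d)`. -/
theorem zeta_bound (d : ℕ) (hd : 4 < d) :
    ∃ C > (0:ℝ), ∀ K₁ K₄' : ℝ, 0 < K₁ → 0 < K₄' →
      ∃ β₀ > (0:ℝ), ∀ β : ℝ, 0 < β → β ≤ β₀ →
      ∀ g : ℕ → ℝ → ℝ, (∀ z, g 1 z = z) →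
      ∀ n : ℕ, 1 ≤ n →
        (∀ j : ℕ, 1 ≤ j → j ≤ n + 1 →
          |zs g j - zs g (j-1)| ≤ K₁ * β * (j:ℝ) ^ (-(d:ℝ)/2)) →
        (∀ m : ℕ, 2 ≤ m → m ≤ n + 1 → ∀ y ∈ Iset d g K₁ β n,
          DifferentiableAt ℝ (g m) y ∧
          |deriv (g m) y| ≤ K₄' * β * (m:ℝ) ^ (-((d:ℝ)-2)/2)) →
        ∀ z ∈ Iset d g K₁ β (n + 1),
          |zeta g n z| ≤ C * K₁ * β * ((n:ℝ) + 1) ^ (-((d:ℝ)-2)/2) := by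

  refine ⟨5, by norm_num, ?_⟩
  intro K₁ K₄' hK₁ hK₄
  refine ⟨1/(2*K₄'), by positivity, ?_⟩
  intro β hβ hββ g hg1 n hn hH1 hderiv z hz
  have hd5 : (5:ℝ) ≤ (d:ℝ) := by exact_mod_cast hd
  have hKβ : 0 < K₁ * β := by positivity
  have hn1 : (1:ℝ) ≤ (n:ℝ) := by exact_mod_cast hn
  set P : ℝ := ((n:ℝ)+1) ^ (-((d:ℝ)-2)/2) with hP
  set Pd : ℝ := ((n:ℝ)+1) ^ (-(d:ℝ)/2) with hPd
  set Pn : ℝ := (n:ℝ) ^ (-((d:ℝ)-2)/2) with hPn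
  have hP0 : 0 < P := by rw [hP]; positivity
  have hPdP : Pd ≤ P := Real.rpow_le_rpow_of_exponent_le (by linarith) (by linarith)
  -- z near z_{n+1}
  have hcast : ((n+1:ℕ):ℝ) = (n:ℝ)+1 := by push_cast; ring
  rw [Iset, Set.mem_Icc, hcast] at hz
  have hz1 : |z - zs g (n+1)| ≤ K₁ * β * P := abs_le.mpr ⟨by linarith [hz.1], by linarith [hz.2]⟩
  -- z_{n+1} near z_n
  have hH := hH1 (n+1) (by omega) (le_refl _)
  rw [Nat.add_sub_cancel, hcast] at hH
  have hz2 : |zs g (n+1) - zs g n| ≤ K₁ * β * Pd := hH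
  -- |z - z_n| bounds
  have hzzn : |z - zs g n| ≤ K₁ * β * (P + Pd) := by
    calc |z - zs g n| ≤ |z - zs g (n+1)| + |zs g (n+1) - zs g n| := abs_sub_le _ _ _
      _ ≤ K₁ * β * P + K₁ * β * Pd := add_le_add hz1 hz2
      _ = K₁ * β * (P + Pd) := by ring
  have hnest : P + Pd ≤ Pn := nest hd hn
  have hzznPn : |z - zs g n| ≤ K₁ * β * Pn :=
    le_trans hzzn (mul_le_mul_of_nonneg_left hnest hKβ.le)
  have hzzn2P : |z - zs g n| ≤ K₁ * β * (2 * P) :=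
    le_trans hzzn (mul_le_mul_of_nonneg_left (by linarith) hKβ.le)
  -- memberships in I_n
  have hzmem : z ∈ Iset d g K₁ β n := by
    rw [Iset, Set.mem_Icc]
    have := abs_le.mp hzznPn
    constructor <;> [linarith [this.1]; linarith [this.2]]
  have hznmem : zs g n ∈ Iset d g K₁ β n := by
    rw [Iset, Set.mem_Icc]
    have : 0 ≤ K₁ * β * Pn := by positivity
    constructor <;> linarith
  -- MVT bound for each g_m
  have hmvt : ∀ m ∈ Icc 2 (n+1), |g m z - g m (zs g n)| ≤
      (K₄' * β * (m:ℝ) ^ (-((d:ℝ)-2)/2)) * |z - zs g n| := by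
    intro m hm
    obtain ⟨hm2, hmn⟩ := Finset.mem_Icc.mp hm
    have := Convex.norm_image_sub_le_of_norm_deriv_le
      (fun y hy => (hderiv m hm2 hmn y hy).1)
      (fun y hy => by rw [Real.norm_eq_abs]; exact (hderiv m hm2 hmn y hy).2)
      (convex_Icc _ _) hznmem hzmem
    simpa [Real.norm_eq_abs] using this
  -- sum bound
  have hsum : ∑ m ∈ Icc 2 (n+1), |g m z - g m (zs g n)| ≤ |z - zs g n| := by
    have h1 : ∑ m ∈ Icc 2 (n+1), |g m z - g m (zs g n)| ≤
        ∑ m ∈ Icc 2 (n+1), (K₄' * β * (m:ℝ) ^ (-((d:ℝ)-2)/2)) * |z - zs g n| :=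
      Finset.sum_le_sum hmvt
    have heq : ∑ m ∈ Icc 2 (n+1), (K₄' * β * (m:ℝ) ^ (-((d:ℝ)-2)/2)) * |z - zs g n|
        = (K₄' * β * |z - zs g n|) * ∑ m ∈ Icc 2 (n+1), (m:ℝ) ^ (-(((d:ℝ)-2)/2)) := by
      rw [Finset.mul_sum]
      apply Finset.sum_congr rfl
      intro m _
      rw [show (-((d:ℝ)-2)/2) = -(((d:ℝ)-2)/2) by ring]
      ring
    have hsum2 : ∑ m ∈ Icc 2 (n+1), (m:ℝ) ^ (-(((d:ℝ)-2)/2)) ≤ 2 :=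
      tele (by linarith) (n+1)
    have habs : (0:ℝ) ≤ |z - zs g n| := abs_nonneg _
    have hsmall : K₄' * β ≤ 1/2 := by
      rw [le_div_iff₀ (by positivity : (0:ℝ) < 2*K₄')] at hββ
      nlinarith
    calc ∑ m ∈ Icc 2 (n+1), |g m z - g m (zs g n)|
        ≤ (K₄' * β * |z - zs g n|) * ∑ m ∈ Icc 2 (n+1), (m:ℝ) ^ (-(((d:ℝ)-2)/2)) := by
          rw [← heq]; exact h1
      _ ≤ (K₄' * β * |z - zs g n|) * 2 := by
          apply mul_le_mul_of_nonneg_left hsum2 (by positivity)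
      _ ≤ |z - zs g n| := by
          have h5 := mul_le_mul_of_nonneg_right hsmall habs
          linarith
  -- zeta at z_n
  obtain ⟨k, rfl⟩ : ∃ k, n = k + 1 := ⟨n - 1, by omega⟩
  have hzetazn : zeta g (k+1) (zs g (k+1)) = zs g (k+1) - zs g (k+2) := by
    have hzs : zs g (k+2) = 1 - ∑ m ∈ Finset.Icc 2 (k+2), g m (zs g (k+1)) := rfl
    rw [zeta, hzs]; ring
  -- decomposition
  have hdecomp : zeta g (k+1) z = zeta g (k+1) (zs g (k+1)) +
      ((z - zs g (k+1)) + ∑ m ∈ Icc 2 (k+1+1), (g m z - g m (zs g (k+1)))) := by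
    rw [zeta, zeta, Finset.sum_sub_distrib]; ring
  have habs1 : |zeta g (k+1) z| ≤ |zeta g (k+1) (zs g (k+1))| + |z - zs g (k+1)| +
      ∑ m ∈ Icc 2 (k+1+1), |g m z - g m (zs g (k+1))| := by
    rw [hdecomp]
    calc _ ≤ |zeta g (k+1) (zs g (k+1))| +
        |(z - zs g (k+1)) + ∑ m ∈ Icc 2 (k+1+1), (g m z - g m (zs g (k+1)))| := abs_add_le _ _
      _ ≤ |zeta g (k+1) (zs g (k+1))| + (|z - zs g (k+1)| +
          |∑ m ∈ Icc 2 (k+1+1), (g m z - g m (zs g (k+1)))|) := by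
            gcongr; exact abs_add_le _ _
      _ ≤ _ := by
            have := Finset.abs_sum_le_sum_abs
              (fun m => g m z - g m (zs g (k+1))) (Icc 2 (k+1+1))
            linarith
  have hzeta_zn_abs : |zeta g (k+1) (zs g (k+1))| ≤ K₁ * β * Pd := by
    rw [hzetazn]
    have : |zs g (k+1) - zs g (k+2)| = |zs g (k+2) - zs g (k+1)| := abs_sub_comm _ _
    rw [this]; exact hz2
  calc |zeta g (k+1) z| ≤ K₁ * β * Pd + K₁ * β * (2*P) + K₁ * β * (2*P) := by
        have := le_trans hsum hzzn2P
        linarith [habs1, hzeta_zn_abs, hzzn2P]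
    _ ≤ 5 * K₁ * β * P := by
        have h6 := mul_le_mul_of_nonneg_left hPdP hKβ.le
        linarith


end Lace31
end
end

section
/- Lemma 3.2 (convolution bounds). For every pair of real exponents a, b there is a constant C = C(a,b) such that for all integers n ≥ 2: (i) if a, b > 1 then Σ_{m=2}^{n} m^{-a} Σ_{j=n-m+1}^{n} j^{-b} ≤ C n^{-(a∧b)+1}; (ii) if a > 2 and b > 0 then the same double sum is ≤ C n^{-(a-2)∧b}; (iii) if a > 2 and b > 1 it is ≤ C n^{-(a-1)∧b}; (iv) if a, b > 2 it is ≤ C n^{-a∧b}. Here a∧b = min(a,b). -/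
noncomputable section
open Real Finset

/-! ### Auxiliary lemmas for the convolution bounds -/

/-- Bernoulli-type step inequality: for `x ≥ 2`, `c > 1`,
`(c-1) x^{-c} ≤ (x-1)^{1-c} - x^{1-c}`. -/
lemma bstep {c : ℝ} (hc : 1 < c) {x : ℝ} (hx : 2 ≤ x) :
    (c - 1) * x ^ (-c) ≤ (x - 1) ^ (1 - c) - x ^ (1 - c) := by
  have hx0 : (0:ℝ) < x := by linarith
  have hx1 : (0:ℝ) < x - 1 := by linarith
  set p := c - 1 with hp
  have hp0 : 0 < p := by simp only [hp]; linarith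
  have hA : 1 + p / x ≤ (x / (x - 1)) ^ p := by
    rcases le_or_gt 1 p with h1p | h1p
    · have hs0 : (0:ℝ) ≤ 1 / (x - 1) := by positivity
      have hs : (-1:ℝ) ≤ 1 / (x - 1) := by linarith
      have h2 := one_add_mul_self_le_rpow_one_add hs h1p
      have he : (1 : ℝ) + 1 / (x - 1) = x / (x - 1) := by field_simp; ring
      rw [he] at h2
      refine le_trans ?_ h2
      have : p / x ≤ p * (1 / (x - 1)) := by
        rw [mul_one_div]
        apply div_le_div_of_nonneg_left hp0.le hx1; linarith
      linarith
    · have hs : (-1:ℝ) ≤ -1 / x := by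
        rw [neg_div, neg_le_neg_iff, div_le_one hx0]; linarith
      have h2 := rpow_one_add_le_one_add_mul_self hs hp0.le h1p.le
      have he : (1 : ℝ) + -1 / x = (x - 1) / x := by field_simp; ring
      have he2 : 1 + p * (-1 / x) = 1 - p / x := by ring
      rw [he, he2] at h2
      have hq : (0:ℝ) < 1 - p / x := by
        have : p / x < 1 := by rw [div_lt_one hx0]; linarith
        linarith
      have hApos : (0:ℝ) < ((x - 1) / x) ^ p := rpow_pos_of_pos (by positivity) p
      have h3 : (1 - p / x)⁻¹ ≤ (((x - 1) / x) ^ p)⁻¹ := inv_anti₀ hApos h2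
      have h4 : 1 + p / x ≤ (1 - p / x)⁻¹ := by
        rw [inv_eq_one_div, le_div_iff₀ hq]; nlinarith [sq_nonneg (p / x)]
      have h5 : (((x - 1) / x) ^ p)⁻¹ = (x / (x - 1)) ^ p := by
        rw [← Real.inv_rpow (by positivity), inv_div]
      linarith [h5 ▸ h3]
  have hxp : (0:ℝ) < x ^ p := rpow_pos_of_pos hx0 p
  have hx1p : (0:ℝ) < (x - 1) ^ p := rpow_pos_of_pos hx1 p
  have h5 : (1 + p / x) * (x - 1) ^ p ≤ x ^ p := by
    rw [Real.div_rpow hx0.le hx1.le] at hA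
    exact (le_div_iff₀ hx1p).mp hA
  have key : (1 + p / x) * x ^ (-p) ≤ (x - 1) ^ (-p) := by
    rw [Real.rpow_neg hx1.le, Real.rpow_neg hx0.le, ← div_eq_mul_inv, inv_eq_one_div,
      div_le_div_iff₀ hxp hx1p]
    linarith
  have hxc : x ^ (-c) = x ^ (-p) * x⁻¹ := by
    rw [show -c = -p + -1 by rw [hp]; ring, Real.rpow_add hx0, Real.rpow_neg_one]
  have e3 : (1 + p / x) * x ^ (-p) = x ^ (-p) + p * x ^ (-c) := by
    rw [hxc]; field_simp
  have key2 : x ^ (-p) + p * x ^ (-c) ≤ (x - 1) ^ (-p) := by rw [← e3]; exact key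
  have e1 : (x - 1) ^ (1 - c) = (x - 1) ^ (-p) := by rw [hp]; ring_nf
  have e2 : x ^ (1 - c) = x ^ (-p) := by rw [hp]; ring_nf
  rw [e1, e2]; linarith
lemma sum_tail_aux {c : ℝ} (hc : 1 < c) {K : ℕ} (hK : 1 ≤ K) (n : ℕ) :
    (c - 1) * ∑ j ∈ Icc (K + 1) n, (j:ℝ) ^ (-c)
      ≤ (K:ℝ) ^ (1 - c) - ((max K n : ℕ):ℝ) ^ (1 - c) := by
  induction n with
  | zero =>
    rw [Finset.Icc_eq_empty (by omega), Finset.sum_empty, mul_zero,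
      Nat.max_eq_left (Nat.zero_le K), sub_self]
  | succ n ih =>
    rcases le_or_gt (K + 1) (n + 1) with h | h
    · have hKn : K ≤ n := by omega
      rw [Finset.sum_Icc_succ_top h, mul_add]
      rw [Nat.max_eq_right hKn] at ih
      rw [Nat.max_eq_right (by omega : K ≤ n + 1)]
      have hx : (2:ℝ) ≤ ((n + 1 : ℕ):ℝ) := by
        push_cast; have : 1 ≤ n := le_trans hK hKn; exact_mod_cast by linarith [(by exact_mod_cast this : (1:ℝ) ≤ (n:ℝ))]
      have hb := bstep hc hx
      have he : ((n + 1 : ℕ):ℝ) - 1 = (n:ℝ) := by push_cast; ring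
      rw [he] at hb
      linarith
    · rw [Finset.Icc_eq_empty (by omega), Finset.sum_empty, mul_zero]
      have h1 : max K n = K := Nat.max_eq_left (by omega)
      have h2 : max K (n + 1) = K := Nat.max_eq_left (by omega)
      rw [h1] at ih; rw [h2, sub_self]

lemma sum_tail {c : ℝ} (hc : 1 < c) {K : ℕ} (hK : 1 ≤ K) (n : ℕ) :
    ∑ j ∈ Icc K n, (j:ℝ) ^ (-c) ≤ (1 + 1 / (c - 1)) * (K:ℝ) ^ (1 - c) := by
  have hc1 : (0:ℝ) < c - 1 := by linarith
  have hK1 : (1:ℝ) ≤ (K:ℝ) := by exact_mod_cast hK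
  have hKp : (0:ℝ) ≤ (K:ℝ) ^ (1 - c) := rpow_nonneg (by linarith) _
  rcases le_or_gt K n with h | h
  · rw [← Finset.Ioc_insert_left h, Finset.sum_insert Finset.left_notMem_Ioc]
    have e : Finset.Ioc K n = Finset.Icc (K + 1) n := by rw [Finset.Icc_add_one_left_eq_Ioc]
    rw [e]
    have h1 := sum_tail_aux hc hK n
    have hM : (0:ℝ) ≤ ((max K n : ℕ):ℝ) ^ (1 - c) := rpow_nonneg (by positivity) _
    have h2 : ∑ j ∈ Icc (K + 1) n, (j:ℝ) ^ (-c) ≤ (K:ℝ) ^ (1 - c) / (c - 1) := by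
      rw [le_div_iff₀ hc1]; nlinarith
    have h3 : (K:ℝ) ^ (-c) ≤ (K:ℝ) ^ (1 - c) :=
      rpow_le_rpow_of_exponent_le hK1 (by linarith)
    have h4 : (1 + 1 / (c - 1)) * (K:ℝ) ^ (1 - c)
        = (K:ℝ) ^ (1 - c) + (K:ℝ) ^ (1 - c) / (c - 1) := by field_simp
    linarith
  · rw [Finset.Icc_eq_empty (by omega), Finset.sum_empty]
    have h0 : (0:ℝ) < 1 / (c - 1) := by positivity
    nlinarith
lemma sum_flip (g : ℕ → ℝ) (n : ℕ) :
    ∑ m ∈ Icc 1 n, g (n + 1 - m) = ∑ k ∈ Icc 1 n, g k := by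
  apply Finset.sum_nbij' (i := fun m => n + 1 - m) (j := fun k => n + 1 - k)
  · intro m hm; simp only [Finset.mem_Icc] at *; omega
  · intro k hk; simp only [Finset.mem_Icc] at *; omega
  · intro m hm; simp only [Finset.mem_Icc] at hm; omega
  · intro k hk; simp only [Finset.mem_Icc] at hk; omega
  · intro m hm; rfl

lemma inner_le_card {b : ℝ} (hb : 0 < b) {n m : ℕ} (hm : 1 ≤ m) (hmn : m ≤ n) :
    ∑ j ∈ Icc (n - m + 1) n, (j:ℝ) ^ (-b) ≤ (m:ℝ) * ((n - m + 1 : ℕ):ℝ) ^ (-b) := by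
  have hcard : (Icc (n - m + 1) n).card = m := by rw [Nat.card_Icc]; omega
  have h := Finset.sum_le_card_nsmul (Icc (n - m + 1) n) (fun j => (j:ℝ) ^ (-b))
      (((n - m + 1 : ℕ):ℝ) ^ (-b)) ?_
  · rw [hcard, nsmul_eq_mul] at h; exact h
  · intro j hj
    rw [Finset.mem_Icc] at hj
    apply rpow_le_rpow_of_nonpos (by positivity) (by exact_mod_cast hj.1) (by linarith)
/-- `(n/2)^e = n^e * 2^(-e)` for `0 ≤ n`. -/
lemma half_rpow {n : ℝ} (hn : 0 ≤ n) (e : ℝ) : (n / 2) ^ e = n ^ e * 2 ^ (-e) := by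
  rw [Real.div_rpow hn (by norm_num), Real.rpow_neg (by norm_num), div_eq_mul_inv]

/-- part 1 bound used in case (i): small `m`, tail estimate on the inner sum. -/
lemma part1_i {a b : ℝ} (ha : 1 < a) (hb : 1 < b) {n : ℕ} (hn : 2 ≤ n) :
    ∑ m ∈ Ioc 1 (n / 2), (m:ℝ) ^ (-a) * ∑ j ∈ Icc (n - m + 1) n, (j:ℝ) ^ (-b)
      ≤ ((1 + 1 / (a - 1)) * ((1 + 1 / (b - 1)) * 2 ^ (b - 1))) * (n:ℝ) ^ (1 - b) := by
  have hn0 : (0:ℝ) < n := by positivity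
  have hCb : (0:ℝ) < 1 + 1 / (b - 1) := by
    have : (0:ℝ) < 1 / (b - 1) := by apply div_pos <;> linarith
    linarith
  have step : ∀ m ∈ Ioc 1 (n / 2),
      (m:ℝ) ^ (-a) * ∑ j ∈ Icc (n - m + 1) n, (j:ℝ) ^ (-b)
        ≤ (m:ℝ) ^ (-a) * ((1 + 1 / (b - 1)) * (((n:ℝ) / 2) ^ (1 - b))) := by
    intro m hm
    rw [Finset.mem_Ioc] at hm
    have hm2 : 2 ≤ m := hm.1
    have hmn : m ≤ n := le_trans hm.2 (Nat.div_le_self n 2)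
    have hnat : n ≤ 2 * (n - m + 1) := by omega
    have hcast : (n:ℝ) ≤ 2 * ((n - m + 1 : ℕ):ℝ) := by exact_mod_cast hnat
    have hhalf : (n:ℝ) / 2 ≤ ((n - m + 1 : ℕ):ℝ) := by linarith
    have h1 : ∑ j ∈ Icc (n - m + 1) n, (j:ℝ) ^ (-b)
        ≤ (1 + 1 / (b - 1)) * ((n - m + 1 : ℕ):ℝ) ^ (1 - b) :=
      sum_tail hb (by omega) n
    have h2 : ((n - m + 1 : ℕ):ℝ) ^ (1 - b) ≤ ((n:ℝ) / 2) ^ (1 - b) :=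
      rpow_le_rpow_of_nonpos (by positivity) hhalf (by linarith)
    have hma : (0:ℝ) ≤ (m:ℝ) ^ (-a) := rpow_nonneg (by positivity) _
    apply mul_le_mul_of_nonneg_left _ hma
    calc ∑ j ∈ Icc (n - m + 1) n, (j:ℝ) ^ (-b)
        ≤ (1 + 1 / (b - 1)) * ((n - m + 1 : ℕ):ℝ) ^ (1 - b) := h1
      _ ≤ (1 + 1 / (b - 1)) * (((n:ℝ) / 2) ^ (1 - b)) := by
          apply mul_le_mul_of_nonneg_left h2 hCb.le
  calc ∑ m ∈ Ioc 1 (n / 2), (m:ℝ) ^ (-a) * ∑ j ∈ Icc (n - m + 1) n, (j:ℝ) ^ (-b)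
      ≤ ∑ m ∈ Ioc 1 (n / 2), (m:ℝ) ^ (-a) * ((1 + 1 / (b - 1)) * (((n:ℝ) / 2) ^ (1 - b))) :=
        Finset.sum_le_sum step
    _ = (∑ m ∈ Ioc 1 (n / 2), (m:ℝ) ^ (-a)) * ((1 + 1 / (b - 1)) * (((n:ℝ) / 2) ^ (1 - b))) := by
        rw [← Finset.sum_mul]
    _ ≤ (1 + 1 / (a - 1)) * ((1 + 1 / (b - 1)) * (((n:ℝ) / 2) ^ (1 - b))) := by
        apply mul_le_mul_of_nonneg_right _ (by positivity)
        calc ∑ m ∈ Ioc 1 (n / 2), (m:ℝ) ^ (-a)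
            ≤ ∑ m ∈ Icc 1 (n / 2), (m:ℝ) ^ (-a) := by
              apply Finset.sum_le_sum_of_subset_of_nonneg
              · intro x hx; rw [Finset.mem_Ioc] at hx; rw [Finset.mem_Icc]; omega
              · intro i _ _; positivity
          _ ≤ (1 + 1 / (a - 1)) * (1:ℝ) ^ (1 - a) := by
              exact_mod_cast sum_tail ha (le_refl 1) (n / 2)
          _ = (1 + 1 / (a - 1)) := by rw [Real.one_rpow, mul_one]
    _ = ((1 + 1 / (a - 1)) * ((1 + 1 / (b - 1)) * 2 ^ (b - 1))) * (n:ℝ) ^ (1 - b) := by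
        rw [half_rpow hn0.le, show -(1 - b) = b - 1 by ring]; ring
/-- part 1 bound used in cases (ii)-(iv): small `m`, crude card bound on the inner sum. -/
lemma part1_b {a b : ℝ} (ha : 2 < a) (hb : 0 < b) {n : ℕ} (hn : 2 ≤ n) :
    ∑ m ∈ Ioc 1 (n / 2), (m:ℝ) ^ (-a) * ∑ j ∈ Icc (n - m + 1) n, (j:ℝ) ^ (-b)
      ≤ ((1 + 1 / (a - 2)) * 2 ^ b) * (n:ℝ) ^ (-b) := by
  have hn0 : (0:ℝ) < n := by positivity
  have step : ∀ m ∈ Ioc 1 (n / 2),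
      (m:ℝ) ^ (-a) * ∑ j ∈ Icc (n - m + 1) n, (j:ℝ) ^ (-b)
        ≤ (m:ℝ) ^ (-(a - 1)) * (((n:ℝ) / 2) ^ (-b)) := by
    intro m hm
    rw [Finset.mem_Ioc] at hm
    have hm2 : 2 ≤ m := hm.1
    have hmn : m ≤ n := le_trans hm.2 (Nat.div_le_self n 2)
    have hm0 : (0:ℝ) < m := by positivity
    have hnat : n ≤ 2 * (n - m + 1) := by omega
    have hcast : (n:ℝ) ≤ 2 * ((n - m + 1 : ℕ):ℝ) := by exact_mod_cast hnat
    have hhalf : (n:ℝ) / 2 ≤ ((n - m + 1 : ℕ):ℝ) := by linarith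
    have h1 := inner_le_card hb (by omega : 1 ≤ m) hmn
    have h2 : ((n - m + 1 : ℕ):ℝ) ^ (-b) ≤ ((n:ℝ) / 2) ^ (-b) :=
      rpow_le_rpow_of_nonpos (by positivity) hhalf (by linarith)
    have hma : (0:ℝ) ≤ (m:ℝ) ^ (-a) := rpow_nonneg hm0.le _
    have e1 : (m:ℝ) ^ (-a) * (m:ℝ) = (m:ℝ) ^ (-(a - 1)) := by
      rw [show -(a - 1) = -a + 1 by ring, Real.rpow_add hm0, Real.rpow_one]
    calc (m:ℝ) ^ (-a) * ∑ j ∈ Icc (n - m + 1) n, (j:ℝ) ^ (-b)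
        ≤ (m:ℝ) ^ (-a) * ((m:ℝ) * ((n - m + 1 : ℕ):ℝ) ^ (-b)) :=
          mul_le_mul_of_nonneg_left h1 hma
      _ = (m:ℝ) ^ (-(a - 1)) * ((n - m + 1 : ℕ):ℝ) ^ (-b) := by rw [← e1]; ring
      _ ≤ (m:ℝ) ^ (-(a - 1)) * (((n:ℝ) / 2) ^ (-b)) := by
          apply mul_le_mul_of_nonneg_left h2 (rpow_nonneg hm0.le _)
  calc ∑ m ∈ Ioc 1 (n / 2), (m:ℝ) ^ (-a) * ∑ j ∈ Icc (n - m + 1) n, (j:ℝ) ^ (-b)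
      ≤ ∑ m ∈ Ioc 1 (n / 2), (m:ℝ) ^ (-(a - 1)) * (((n:ℝ) / 2) ^ (-b)) :=
        Finset.sum_le_sum step
    _ = (∑ m ∈ Ioc 1 (n / 2), (m:ℝ) ^ (-(a - 1))) * (((n:ℝ) / 2) ^ (-b)) := by
        rw [← Finset.sum_mul]
    _ ≤ (1 + 1 / (a - 2)) * (((n:ℝ) / 2) ^ (-b)) := by
        apply mul_le_mul_of_nonneg_right _ (by positivity)
        calc ∑ m ∈ Ioc 1 (n / 2), (m:ℝ) ^ (-(a - 1))
            ≤ ∑ m ∈ Icc 1 (n / 2), (m:ℝ) ^ (-(a - 1)) := by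
              apply Finset.sum_le_sum_of_subset_of_nonneg
              · intro x hx; rw [Finset.mem_Ioc] at hx; rw [Finset.mem_Icc]; omega
              · intro i _ _; positivity
          _ ≤ (1 + 1 / (a - 1 - 1)) * (1:ℝ) ^ (1 - (a - 1)) := by
              exact_mod_cast sum_tail (by linarith) (le_refl 1) (n / 2)
          _ = (1 + 1 / (a - 2)) := by
              rw [Real.one_rpow, mul_one, show a - 1 - 1 = a - 2 by ring]
    _ = ((1 + 1 / (a - 2)) * 2 ^ b) * (n:ℝ) ^ (-b) := by
        rw [half_rpow hn0.le, neg_neg]; ring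

/-- generic part 2 bound: for `m > n/2`, `m^(-a) ≤ (n/2)^(-a)`; if each inner sum
is bounded by `Q ≥ 0` then part 2 is at most `n * (n/2)^(-a) * Q`. -/
lemma part2_gen {a b Q : ℝ} (ha : 0 < a) (hQ : 0 ≤ Q) {n : ℕ} (hn : 2 ≤ n)
    (hin : ∀ m ∈ Ioc (n / 2) n, ∑ j ∈ Icc (n - m + 1) n, (j:ℝ) ^ (-b) ≤ Q) :
    ∑ m ∈ Ioc (n / 2) n, (m:ℝ) ^ (-a) * ∑ j ∈ Icc (n - m + 1) n, (j:ℝ) ^ (-b)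
      ≤ (n:ℝ) * (((n:ℝ) / 2) ^ (-a) * Q) := by
  have hn0 : (0:ℝ) < n := by positivity
  have hhpos : (0:ℝ) < (n:ℝ) / 2 := by positivity
  have step : ∀ m ∈ Ioc (n / 2) n,
      (m:ℝ) ^ (-a) * ∑ j ∈ Icc (n - m + 1) n, (j:ℝ) ^ (-b)
        ≤ ((n:ℝ) / 2) ^ (-a) * Q := by
    intro m hm
    rw [Finset.mem_Ioc] at hm
    have hnat : n ≤ 2 * m := by omega
    have hcast : (n:ℝ) ≤ 2 * (m:ℝ) := by exact_mod_cast hnat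
    have hhalf : (n:ℝ) / 2 ≤ (m:ℝ) := by linarith
    have h1 : (m:ℝ) ^ (-a) ≤ ((n:ℝ) / 2) ^ (-a) :=
      rpow_le_rpow_of_nonpos hhpos hhalf (by linarith)
    have h2 : (0:ℝ) ≤ ∑ j ∈ Icc (n - m + 1) n, (j:ℝ) ^ (-b) := by
      apply Finset.sum_nonneg; intro i _; positivity
    exact mul_le_mul h1 (hin m (by rw [Finset.mem_Ioc]; exact hm)) h2 (by positivity)
  calc ∑ m ∈ Ioc (n / 2) n, (m:ℝ) ^ (-a) * ∑ j ∈ Icc (n - m + 1) n, (j:ℝ) ^ (-b)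
      ≤ ∑ _m ∈ Ioc (n / 2) n, ((n:ℝ) / 2) ^ (-a) * Q := Finset.sum_le_sum step
    _ = ((Ioc (n / 2) n).card : ℝ) * (((n:ℝ) / 2) ^ (-a) * Q) := by
        rw [Finset.sum_const, nsmul_eq_mul]
    _ ≤ (n:ℝ) * (((n:ℝ) / 2) ^ (-a) * Q) := by
        apply mul_le_mul_of_nonneg_right _ (by positivity)
        have : (Ioc (n / 2) n).card ≤ n := by rw [Nat.card_Ioc]; omega
        exact_mod_cast this
lemma part2_a {a b : ℝ} (ha : 0 < a) (hb : 0 < b) {n : ℕ} (hn : 2 ≤ n) :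
    ∑ m ∈ Ioc (n / 2) n, (m:ℝ) ^ (-a) * ∑ j ∈ Icc (n - m + 1) n, (j:ℝ) ^ (-b)
      ≤ (2:ℝ) ^ a * (n:ℝ) ^ (2 - a) := by
  have hn0 : (0:ℝ) < n := by positivity
  have h := part2_gen (b := b) (Q := (n:ℝ)) ha hn0.le hn ?_
  · calc _ ≤ (n:ℝ) * (((n:ℝ) / 2) ^ (-a) * (n:ℝ)) := h
      _ = (2:ℝ) ^ a * (n:ℝ) ^ (2 - a) := by
          rw [half_rpow hn0.le, neg_neg,
            show (2:ℝ) - a = -a + 1 + 1 by ring, Real.rpow_add hn0, Real.rpow_add hn0,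
            Real.rpow_one]
          ring
  · intro m hm
    rw [Finset.mem_Ioc] at hm
    have hm1 : 1 ≤ m := by omega
    have hone : (1:ℝ) ≤ ((n - m + 1 : ℕ):ℝ) := by exact_mod_cast (by omega : 1 ≤ n - m + 1)
    calc ∑ j ∈ Icc (n - m + 1) n, (j:ℝ) ^ (-b)
        ≤ (m:ℝ) * ((n - m + 1 : ℕ):ℝ) ^ (-b) := inner_le_card hb hm1 hm.2
      _ ≤ (m:ℝ) * 1 := by
          apply mul_le_mul_of_nonneg_left _ (by positivity)
          exact Real.rpow_le_one_of_one_le_of_nonpos hone (by linarith)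
      _ ≤ (n:ℝ) := by rw [mul_one]; exact_mod_cast hm.2

lemma part2_b {a b : ℝ} (ha : 0 < a) (hb : 1 < b) {n : ℕ} (hn : 2 ≤ n) :
    ∑ m ∈ Ioc (n / 2) n, (m:ℝ) ^ (-a) * ∑ j ∈ Icc (n - m + 1) n, (j:ℝ) ^ (-b)
      ≤ ((1 + 1 / (b - 1)) * 2 ^ a) * (n:ℝ) ^ (1 - a) := by
  have hn0 : (0:ℝ) < n := by positivity
  have hCb : (0:ℝ) < 1 + 1 / (b - 1) := by
    have : (0:ℝ) < 1 / (b - 1) := by apply div_pos <;> linarith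
    linarith
  have h := part2_gen (b := b) (Q := 1 + 1 / (b - 1)) ha hCb.le hn ?_
  · calc _ ≤ (n:ℝ) * (((n:ℝ) / 2) ^ (-a) * (1 + 1 / (b - 1))) := h
      _ = ((1 + 1 / (b - 1)) * 2 ^ a) * (n:ℝ) ^ (1 - a) := by
          rw [half_rpow hn0.le, neg_neg,
            show (1:ℝ) - a = -a + 1 by ring, Real.rpow_add hn0, Real.rpow_one]
          ring
  · intro m hm
    rw [Finset.mem_Ioc] at hm
    have hone : (1:ℝ) ≤ ((n - m + 1 : ℕ):ℝ) := by exact_mod_cast (by omega : 1 ≤ n - m + 1)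
    calc ∑ j ∈ Icc (n - m + 1) n, (j:ℝ) ^ (-b)
        ≤ (1 + 1 / (b - 1)) * ((n - m + 1 : ℕ):ℝ) ^ (1 - b) := sum_tail hb (by omega) n
      _ ≤ (1 + 1 / (b - 1)) * 1 := by
          apply mul_le_mul_of_nonneg_left _ hCb.le
          exact Real.rpow_le_one_of_one_le_of_nonpos hone (by linarith)
      _ = (1 + 1 / (b - 1)) := mul_one _

lemma part2_c {a b : ℝ} (ha : 0 < a) (hb : 2 < b) {n : ℕ} (hn : 2 ≤ n) :
    ∑ m ∈ Ioc (n / 2) n, (m:ℝ) ^ (-a) * ∑ j ∈ Icc (n - m + 1) n, (j:ℝ) ^ (-b)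
      ≤ ((1 + 1 / (b - 1)) * (1 + 1 / (b - 2)) * 2 ^ a) * (n:ℝ) ^ (-a) := by
  have hn0 : (0:ℝ) < n := by positivity
  have hhpos : (0:ℝ) < (n:ℝ) / 2 := by positivity
  have hCb : (0:ℝ) < 1 + 1 / (b - 1) := by
    have : (0:ℝ) < 1 / (b - 1) := by apply div_pos <;> linarith
    linarith
  have step : ∀ m ∈ Ioc (n / 2) n,
      (m:ℝ) ^ (-a) * ∑ j ∈ Icc (n - m + 1) n, (j:ℝ) ^ (-b)
        ≤ ((n:ℝ) / 2) ^ (-a) * ((1 + 1 / (b - 1)) * ((n - m + 1 : ℕ):ℝ) ^ (-(b - 1))) := by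
    intro m hm
    rw [Finset.mem_Ioc] at hm
    have hnat : n ≤ 2 * m := by omega
    have hcast : (n:ℝ) ≤ 2 * (m:ℝ) := by exact_mod_cast hnat
    have h1 : (m:ℝ) ^ (-a) ≤ ((n:ℝ) / 2) ^ (-a) :=
      rpow_le_rpow_of_nonpos hhpos (by linarith) (by linarith)
    have h2 : ∑ j ∈ Icc (n - m + 1) n, (j:ℝ) ^ (-b)
        ≤ (1 + 1 / (b - 1)) * ((n - m + 1 : ℕ):ℝ) ^ (-(b - 1)) := by
      rw [show -(b - 1) = 1 - b by ring]
      exact sum_tail (by linarith) (by omega) n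
    have h3 : (0:ℝ) ≤ ∑ j ∈ Icc (n - m + 1) n, (j:ℝ) ^ (-b) := by
      apply Finset.sum_nonneg; intro i _; positivity
    exact mul_le_mul h1 h2 h3 (by positivity)
  calc ∑ m ∈ Ioc (n / 2) n, (m:ℝ) ^ (-a) * ∑ j ∈ Icc (n - m + 1) n, (j:ℝ) ^ (-b)
      ≤ ∑ m ∈ Ioc (n / 2) n,
          ((n:ℝ) / 2) ^ (-a) * ((1 + 1 / (b - 1)) * ((n - m + 1 : ℕ):ℝ) ^ (-(b - 1))) :=
        Finset.sum_le_sum step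
    _ = ((n:ℝ) / 2) ^ (-a) * (1 + 1 / (b - 1))
          * ∑ m ∈ Ioc (n / 2) n, ((n - m + 1 : ℕ):ℝ) ^ (-(b - 1)) := by
        rw [Finset.mul_sum]; apply Finset.sum_congr rfl; intro m _; ring
    _ ≤ ((n:ℝ) / 2) ^ (-a) * (1 + 1 / (b - 1)) * (1 + 1 / (b - 2)) := by
        apply mul_le_mul_of_nonneg_left _ (by positivity)
        calc ∑ m ∈ Ioc (n / 2) n, ((n - m + 1 : ℕ):ℝ) ^ (-(b - 1))
            ≤ ∑ m ∈ Icc 1 n, ((n - m + 1 : ℕ):ℝ) ^ (-(b - 1)) := by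
              apply Finset.sum_le_sum_of_subset_of_nonneg
              · intro x hx; rw [Finset.mem_Ioc] at hx; rw [Finset.mem_Icc]; omega
              · intro i _ _; positivity
          _ = ∑ m ∈ Icc 1 n, ((n + 1 - m : ℕ):ℝ) ^ (-(b - 1)) := by
              apply Finset.sum_congr rfl; intro m hm
              rw [Finset.mem_Icc] at hm
              congr 2; omega
          _ = ∑ k ∈ Icc 1 n, (k:ℝ) ^ (-(b - 1)) :=
              sum_flip (fun k => (k:ℝ) ^ (-(b - 1))) n
          _ ≤ (1 + 1 / (b - 1 - 1)) * (1:ℝ) ^ (1 - (b - 1)) := by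
              exact_mod_cast sum_tail (by linarith) (le_refl 1) n
          _ = (1 + 1 / (b - 2)) := by
              rw [Real.one_rpow, mul_one, show b - 1 - 1 = b - 2 by ring]
    _ = ((1 + 1 / (b - 1)) * (1 + 1 / (b - 2)) * 2 ^ a) * (n:ℝ) ^ (-a) := by
        rw [half_rpow hn0.le, neg_neg]; ring

/-- Splitting the outer sum at `n/2`. -/
lemma conv_split (f : ℕ → ℝ) {n : ℕ} (hn : 2 ≤ n) :
    ∑ m ∈ Icc 2 n, f m = ∑ m ∈ Ioc 1 (n / 2), f m + ∑ m ∈ Ioc (n / 2) n, f m := by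
  rw [Finset.sum_Ioc_consecutive _ (by omega : 1 ≤ n / 2) (Nat.div_le_self n 2)]
  apply Finset.sum_congr _ (fun _ _ => rfl)
  ext x; simp only [Finset.mem_Icc, Finset.mem_Ioc]; omega

lemma case_i (a b : ℝ) : ∃ C > (0:ℝ), ∀ n : ℕ, 2 ≤ n → 1 < a → 1 < b →
    (∑ m ∈ Finset.Icc 2 n, (m:ℝ) ^ (-a) * ∑ j ∈ Finset.Icc (n - m + 1) n, (j:ℝ) ^ (-b))
      ≤ C * (n:ℝ) ^ (-(min a b) + 1) := by
  by_cases h : 1 < a ∧ 1 < b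
  · obtain ⟨ha, hb⟩ := h
    have hCa : (0:ℝ) < 1 + 1 / (a - 1) := by
      have : (0:ℝ) < 1 / (a - 1) := by apply div_pos <;> linarith
      linarith
    have hCb : (0:ℝ) < 1 + 1 / (b - 1) := by
      have : (0:ℝ) < 1 / (b - 1) := by apply div_pos <;> linarith
      linarith
    have h2b : (0:ℝ) < (2:ℝ) ^ (b - 1) := rpow_pos_of_pos two_pos _
    have h2a : (0:ℝ) < (2:ℝ) ^ a := rpow_pos_of_pos two_pos _
    set C1 := (1 + 1 / (a - 1)) * ((1 + 1 / (b - 1)) * 2 ^ (b - 1)) with hC1d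
    set C2 := (1 + 1 / (b - 1)) * 2 ^ a with hC2d
    have hC1 : 0 < C1 := by rw [hC1d]; positivity
    have hC2 : 0 < C2 := by rw [hC2d]; positivity
    refine ⟨C1 + C2, by positivity, fun n hn _ _ => ?_⟩
    have hn1 : (1:ℝ) ≤ (n:ℝ) := by exact_mod_cast (by omega : 1 ≤ n)
    have h1 := part1_i ha hb hn
    have h2 := part2_b (show (0:ℝ) < a by linarith) hb hn
    have e1 : (n:ℝ) ^ (1 - b) ≤ (n:ℝ) ^ (-(min a b) + 1) :=
      rpow_le_rpow_of_exponent_le hn1 (by have := min_le_right a b; linarith)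
    have e2 : (n:ℝ) ^ (1 - a) ≤ (n:ℝ) ^ (-(min a b) + 1) :=
      rpow_le_rpow_of_exponent_le hn1 (by have := min_le_left a b; linarith)
    rw [conv_split _ hn]
    calc _ ≤ C1 * (n:ℝ) ^ (1 - b) + C2 * (n:ℝ) ^ (1 - a) := add_le_add h1 h2
      _ ≤ C1 * (n:ℝ) ^ (-(min a b) + 1) + C2 * (n:ℝ) ^ (-(min a b) + 1) :=
          add_le_add (mul_le_mul_of_nonneg_left e1 hC1.le)
            (mul_le_mul_of_nonneg_left e2 hC2.le)
      _ = (C1 + C2) * (n:ℝ) ^ (-(min a b) + 1) := by ring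
  · exact ⟨1, one_pos, fun n hn ha hb => absurd ⟨ha, hb⟩ h⟩

lemma case_ii (a b : ℝ) : ∃ C > (0:ℝ), ∀ n : ℕ, 2 ≤ n → 2 < a → 0 < b →
    (∑ m ∈ Finset.Icc 2 n, (m:ℝ) ^ (-a) * ∑ j ∈ Finset.Icc (n - m + 1) n, (j:ℝ) ^ (-b))
      ≤ C * (n:ℝ) ^ (-(min (a - 2) b)) := by
  by_cases h : 2 < a ∧ 0 < b
  · obtain ⟨ha, hb⟩ := h
    have hCa : (0:ℝ) < 1 + 1 / (a - 2) := by
      have : (0:ℝ) < 1 / (a - 2) := by apply div_pos <;> linarith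
      linarith
    have h2b : (0:ℝ) < (2:ℝ) ^ b := rpow_pos_of_pos two_pos _
    have h2a : (0:ℝ) < (2:ℝ) ^ a := rpow_pos_of_pos two_pos _
    set C1 := (1 + 1 / (a - 2)) * 2 ^ b with hC1d
    set C2 := (2:ℝ) ^ a with hC2d
    have hC1 : 0 < C1 := by rw [hC1d]; positivity
    refine ⟨C1 + C2, by positivity, fun n hn _ _ => ?_⟩
    have hn1 : (1:ℝ) ≤ (n:ℝ) := by exact_mod_cast (by omega : 1 ≤ n)
    have h1 := part1_b ha hb hn
    have h2 := part2_a (show (0:ℝ) < a by linarith) hb hn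
    have e1 : (n:ℝ) ^ (-b) ≤ (n:ℝ) ^ (-(min (a - 2) b)) :=
      rpow_le_rpow_of_exponent_le hn1 (by have := min_le_right (a - 2) b; linarith)
    have e2 : (n:ℝ) ^ (2 - a) ≤ (n:ℝ) ^ (-(min (a - 2) b)) :=
      rpow_le_rpow_of_exponent_le hn1 (by have := min_le_left (a - 2) b; linarith)
    rw [conv_split _ hn]
    calc _ ≤ C1 * (n:ℝ) ^ (-b) + C2 * (n:ℝ) ^ (2 - a) := add_le_add h1 h2
      _ ≤ C1 * (n:ℝ) ^ (-(min (a - 2) b)) + C2 * (n:ℝ) ^ (-(min (a - 2) b)) :=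
          add_le_add (mul_le_mul_of_nonneg_left e1 hC1.le)
            (mul_le_mul_of_nonneg_left e2 h2a.le)
      _ = (C1 + C2) * (n:ℝ) ^ (-(min (a - 2) b)) := by ring
  · exact ⟨1, one_pos, fun n hn ha hb => absurd ⟨ha, hb⟩ h⟩

lemma case_iii (a b : ℝ) : ∃ C > (0:ℝ), ∀ n : ℕ, 2 ≤ n → 2 < a → 1 < b →
    (∑ m ∈ Finset.Icc 2 n, (m:ℝ) ^ (-a) * ∑ j ∈ Finset.Icc (n - m + 1) n, (j:ℝ) ^ (-b))
      ≤ C * (n:ℝ) ^ (-(min (a - 1) b)) := by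
  by_cases h : 2 < a ∧ 1 < b
  · obtain ⟨ha, hb⟩ := h
    have hCa : (0:ℝ) < 1 + 1 / (a - 2) := by
      have : (0:ℝ) < 1 / (a - 2) := by apply div_pos <;> linarith
      linarith
    have hCb : (0:ℝ) < 1 + 1 / (b - 1) := by
      have : (0:ℝ) < 1 / (b - 1) := by apply div_pos <;> linarith
      linarith
    have h2b : (0:ℝ) < (2:ℝ) ^ b := rpow_pos_of_pos two_pos _
    have h2a : (0:ℝ) < (2:ℝ) ^ a := rpow_pos_of_pos two_pos _
    set C1 := (1 + 1 / (a - 2)) * 2 ^ b with hC1d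
    set C2 := (1 + 1 / (b - 1)) * 2 ^ a with hC2d
    have hC1 : 0 < C1 := by rw [hC1d]; positivity
    have hC2 : 0 < C2 := by rw [hC2d]; positivity
    refine ⟨C1 + C2, by positivity, fun n hn _ _ => ?_⟩
    have hn1 : (1:ℝ) ≤ (n:ℝ) := by exact_mod_cast (by omega : 1 ≤ n)
    have h1 := part1_b ha (by linarith : (0:ℝ) < b) hn
    have h2 := part2_b (show (0:ℝ) < a by linarith) hb hn
    have e1 : (n:ℝ) ^ (-b) ≤ (n:ℝ) ^ (-(min (a - 1) b)) :=
      rpow_le_rpow_of_exponent_le hn1 (by have := min_le_right (a - 1) b; linarith)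
    have e2 : (n:ℝ) ^ (1 - a) ≤ (n:ℝ) ^ (-(min (a - 1) b)) :=
      rpow_le_rpow_of_exponent_le hn1 (by have := min_le_left (a - 1) b; linarith)
    rw [conv_split _ hn]
    calc _ ≤ C1 * (n:ℝ) ^ (-b) + C2 * (n:ℝ) ^ (1 - a) := add_le_add h1 h2
      _ ≤ C1 * (n:ℝ) ^ (-(min (a - 1) b)) + C2 * (n:ℝ) ^ (-(min (a - 1) b)) :=
          add_le_add (mul_le_mul_of_nonneg_left e1 hC1.le)
            (mul_le_mul_of_nonneg_left e2 hC2.le)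
      _ = (C1 + C2) * (n:ℝ) ^ (-(min (a - 1) b)) := by ring
  · exact ⟨1, one_pos, fun n hn ha hb => absurd ⟨ha, hb⟩ h⟩

lemma case_iv (a b : ℝ) : ∃ C > (0:ℝ), ∀ n : ℕ, 2 ≤ n → 2 < a → 2 < b →
    (∑ m ∈ Finset.Icc 2 n, (m:ℝ) ^ (-a) * ∑ j ∈ Finset.Icc (n - m + 1) n, (j:ℝ) ^ (-b))
      ≤ C * (n:ℝ) ^ (-(min a b)) := by
  by_cases h : 2 < a ∧ 2 < b
  · obtain ⟨ha, hb⟩ := h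
    have hCa : (0:ℝ) < 1 + 1 / (a - 2) := by
      have : (0:ℝ) < 1 / (a - 2) := by apply div_pos <;> linarith
      linarith
    have hCb : (0:ℝ) < 1 + 1 / (b - 1) := by
      have : (0:ℝ) < 1 / (b - 1) := by apply div_pos <;> linarith
      linarith
    have hCb2 : (0:ℝ) < 1 + 1 / (b - 2) := by
      have : (0:ℝ) < 1 / (b - 2) := by apply div_pos <;> linarith
      linarith
    have h2b : (0:ℝ) < (2:ℝ) ^ b := rpow_pos_of_pos two_pos _
    have h2a : (0:ℝ) < (2:ℝ) ^ a := rpow_pos_of_pos two_pos _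
    set C1 := (1 + 1 / (a - 2)) * 2 ^ b with hC1d
    set C2 := (1 + 1 / (b - 1)) * (1 + 1 / (b - 2)) * 2 ^ a with hC2d
    have hC1 : 0 < C1 := by rw [hC1d]; positivity
    have hC2 : 0 < C2 := by rw [hC2d]; positivity
    refine ⟨C1 + C2, by positivity, fun n hn _ _ => ?_⟩
    have hn1 : (1:ℝ) ≤ (n:ℝ) := by exact_mod_cast (by omega : 1 ≤ n)
    have h1 := part1_b ha (by linarith : (0:ℝ) < b) hn
    have h2 := part2_c (by linarith : (0:ℝ) < a) hb hn
    have e1 : (n:ℝ) ^ (-b) ≤ (n:ℝ) ^ (-(min a b)) :=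
      rpow_le_rpow_of_exponent_le hn1 (by have := min_le_right a b; linarith)
    have e2 : (n:ℝ) ^ (-a) ≤ (n:ℝ) ^ (-(min a b)) :=
      rpow_le_rpow_of_exponent_le hn1 (by have := min_le_left a b; linarith)
    rw [conv_split _ hn]
    calc _ ≤ C1 * (n:ℝ) ^ (-b) + C2 * (n:ℝ) ^ (-a) := add_le_add h1 h2
      _ ≤ C1 * (n:ℝ) ^ (-(min a b)) + C2 * (n:ℝ) ^ (-(min a b)) :=
          add_le_add (mul_le_mul_of_nonneg_left e1 hC1.le)
            (mul_le_mul_of_nonneg_left e2 hC2.le)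
      _ = (C1 + C2) * (n:ℝ) ^ (-(min a b)) := by ring
  · exact ⟨1, one_pos, fun n hn ha hb => absurd ⟨ha, hb⟩ h⟩

/-- **Lemma 3.2** (convolution bounds). -/
theorem convolution_bounds (a b : ℝ) :
    ∃ C > (0:ℝ), ∀ n : ℕ, 2 ≤ n →
      ((1 < a → 1 < b →
        (∑ m ∈ Finset.Icc 2 n, (m:ℝ) ^ (-a) * ∑ j ∈ Finset.Icc (n - m + 1) n, (j:ℝ) ^ (-b))
          ≤ C * (n:ℝ) ^ (-(min a b) + 1)) ∧
      (2 < a → 0 < b →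
        (∑ m ∈ Finset.Icc 2 n, (m:ℝ) ^ (-a) * ∑ j ∈ Finset.Icc (n - m + 1) n, (j:ℝ) ^ (-b))
          ≤ C * (n:ℝ) ^ (-(min (a - 2) b))) ∧
      (2 < a → 1 < b →
        (∑ m ∈ Finset.Icc 2 n, (m:ℝ) ^ (-a) * ∑ j ∈ Finset.Icc (n - m + 1) n, (j:ℝ) ^ (-b))
          ≤ C * (n:ℝ) ^ (-(min (a - 1) b))) ∧
      (2 < a → 2 < b →
        (∑ m ∈ Finset.Icc 2 n, (m:ℝ) ^ (-a) * ∑ j ∈ Finset.Icc (n - m + 1) n, (j:ℝ) ^ (-b))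
          ≤ C * (n:ℝ) ^ (-(min a b)))) := by
  obtain ⟨C1, hC1, H1⟩ := case_i a b
  obtain ⟨C2, hC2, H2⟩ := case_ii a b
  obtain ⟨C3, hC3, H3⟩ := case_iii a b
  obtain ⟨C4, hC4, H4⟩ := case_iv a b
  refine ⟨C1 + C2 + C3 + C4, by linarith, fun n hn => ⟨?_, ?_, ?_, ?_⟩⟩
  · intro ha hb
    refine (H1 n hn ha hb).trans (mul_le_mul_of_nonneg_right (by linarith)
      (rpow_nonneg (by positivity) _))
  · intro ha hb
    refine (H2 n hn ha hb).trans (mul_le_mul_of_nonneg_right (by linarith)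
      (rpow_nonneg (by positivity) _))
  · intro ha hb
    refine (H3 n hn ha hb).trans (mul_le_mul_of_nonneg_right (by linarith)
      (rpow_nonneg (by positivity) _))
  · intro ha hb
    refine (H4 n hn ha hb).trans (mul_le_mul_of_nonneg_right (by linarith)
      (rpow_nonneg (by positivity) _))
end
end

section
/- Product Taylor bounds. Let x_1, …, x_m be real numbers with |x_l| < 1 for each l, and set χ = Σ_{l=1}^{m} |x_l|/(1-|x_l|). Then (i) |∏_{l=1}^{m} (1-x_l)^{-1} - 1| ≤ χ e^{χ}, and (ii) |∏_{l=1}^{m} (1-x_l)^{-1} - 1 - Σ_{l=1}^{m} x_l| ≤ (3/2) χ² e^{χ}. -/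
noncomputable section
open Real Finset

private lemma abs_prod_le' {ι : Type*} (s : Finset ι) (a y : ι → ℝ)
    (h : ∀ i ∈ s, |a i| ≤ y i) :
    |∏ i ∈ s, (1 + a i)| ≤ ∏ i ∈ s, (1 + y i) := by
  rw [Finset.abs_prod]
  refine Finset.prod_le_prod (fun i _ => abs_nonneg _) (fun i hi => ?_)
  calc |1 + a i| ≤ |(1:ℝ)| + |a i| := abs_add_le 1 (a i)
    _ ≤ 1 + y i := by simp only [abs_one]; linarith [h i hi]

private lemma one_le_prod' {ι : Type*} (s : Finset ι) (y : ι → ℝ)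
    (h : ∀ i ∈ s, 0 ≤ y i) : (1:ℝ) ≤ ∏ i ∈ s, (1 + y i) := by
  calc (1:ℝ) = ∏ _i ∈ s, (1:ℝ) := by simp
    _ ≤ ∏ i ∈ s, (1 + y i) :=
      Finset.prod_le_prod (by simp) (fun i hi => by linarith [h i hi])

private lemma lemA {ι : Type*} (s : Finset ι) (a y : ι → ℝ)
    (h : ∀ i ∈ s, |a i| ≤ y i) :
    |∏ i ∈ s, (1 + a i) - 1| ≤ ∏ i ∈ s, (1 + y i) - 1 := by
  induction s using Finset.cons_induction with
  | empty => simp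
  | cons i s hi ih =>
    have h' : ∀ j ∈ s, |a j| ≤ y j := fun j hj => h j (Finset.mem_cons.mpr (Or.inr hj))
    have hai : |a i| ≤ y i := h i (Finset.mem_cons_self i s)
    have hyi : 0 ≤ y i := le_trans (abs_nonneg _) hai
    have hP := abs_prod_le' s a y h'
    rw [Finset.prod_cons, Finset.prod_cons]
    have key : (1 + a i) * ∏ j ∈ s, (1 + a j) - 1
        = (∏ j ∈ s, (1 + a j) - 1) + a i * ∏ j ∈ s, (1 + a j) := by ring
    rw [key]
    calc |(∏ j ∈ s, (1 + a j) - 1) + a i * ∏ j ∈ s, (1 + a j)|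
        ≤ |∏ j ∈ s, (1 + a j) - 1| + |a i * ∏ j ∈ s, (1 + a j)| := abs_add_le _ _
      _ = |∏ j ∈ s, (1 + a j) - 1| + |a i| * |∏ j ∈ s, (1 + a j)| := by rw [abs_mul]
      _ ≤ (∏ j ∈ s, (1 + y j) - 1) + y i * ∏ j ∈ s, (1 + y j) := by
          have := mul_le_mul hai hP (abs_nonneg _) hyi
          linarith [ih h']
      _ = (1 + y i) * ∏ j ∈ s, (1 + y j) - 1 := by ring

private lemma lemB {ι : Type*} (s : Finset ι) (a y : ι → ℝ)
    (h : ∀ i ∈ s, |a i| ≤ y i) :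
    |∏ i ∈ s, (1 + a i) - 1 - ∑ i ∈ s, a i|
      ≤ ∏ i ∈ s, (1 + y i) - 1 - ∑ i ∈ s, y i := by
  induction s using Finset.cons_induction with
  | empty => simp
  | cons i s hi ih =>
    have h' : ∀ j ∈ s, |a j| ≤ y j := fun j hj => h j (Finset.mem_cons.mpr (Or.inr hj))
    have hai : |a i| ≤ y i := h i (Finset.mem_cons_self i s)
    have hyi : 0 ≤ y i := le_trans (abs_nonneg _) hai
    have hPm1 := lemA s a y h'
    rw [Finset.prod_cons, Finset.prod_cons, Finset.sum_cons, Finset.sum_cons]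
    have key : (1 + a i) * ∏ j ∈ s, (1 + a j) - 1 - (a i + ∑ j ∈ s, a j)
        = (∏ j ∈ s, (1 + a j) - 1 - ∑ j ∈ s, a j)
          + a i * (∏ j ∈ s, (1 + a j) - 1) := by ring
    rw [key]
    calc |(∏ j ∈ s, (1 + a j) - 1 - ∑ j ∈ s, a j)
            + a i * (∏ j ∈ s, (1 + a j) - 1)|
        ≤ |∏ j ∈ s, (1 + a j) - 1 - ∑ j ∈ s, a j|
            + |a i| * |∏ j ∈ s, (1 + a j) - 1| := by
          rw [← abs_mul]; exact abs_add_le _ _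
      _ ≤ (∏ j ∈ s, (1 + y j) - 1 - ∑ j ∈ s, y j)
            + y i * (∏ j ∈ s, (1 + y j) - 1) := by
          have := mul_le_mul hai hPm1 (abs_nonneg _) hyi
          linarith [ih h']
      _ = (1 + y i) * ∏ j ∈ s, (1 + y j) - 1 - (y i + ∑ j ∈ s, y j) := by ring

private lemma lemD {t : ℝ} (ht : 0 ≤ t) : Real.exp t - 1 ≤ t * Real.exp t := by
  have h1 : -t + 1 ≤ Real.exp (-t) := Real.add_one_le_exp _
  have h2 : Real.exp (-t) * Real.exp t = 1 := by
    rw [← Real.exp_add]; simp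
  nlinarith [mul_le_mul_of_nonneg_right h1 (Real.exp_pos t).le]

private lemma lemE {t : ℝ} (ht : 0 ≤ t) :
    Real.exp t - 1 - t ≤ t ^ 2 / 2 * Real.exp t := by
  have hmono : MonotoneOn
      (fun s : ℝ => s + 1 + s ^ 2 / 2 * Real.exp s - Real.exp s) (Set.Ici 0) := by
    have hdiff : Differentiable ℝ
        (fun s : ℝ => s + 1 + s ^ 2 / 2 * Real.exp s - Real.exp s) := by
      fun_prop
    apply monotoneOn_of_deriv_nonneg (convex_Ici 0) hdiff.continuous.continuousOn
      hdiff.differentiableOn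
    intro s hs
    rw [interior_Ici] at hs
    have hd : HasDerivAt (fun s : ℝ => s + 1 + s ^ 2 / 2 * Real.exp s - Real.exp s)
        (1 + ((2 * s ^ 1 / 2) * Real.exp s + s ^ 2 / 2 * Real.exp s) - Real.exp s)
        s := by
      have h1 : HasDerivAt (fun s : ℝ => s + 1) 1 s := (hasDerivAt_id s).add_const 1
      have h2 : HasDerivAt (fun s : ℝ => s ^ 2 / 2) (2 * s ^ 1 / 2) s :=
        (hasDerivAt_pow 2 s).div_const 2
      have h3 := Real.hasDerivAt_exp s
      exact (h1.add (h2.mul h3)).sub h3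
    rw [hd.deriv]
    have := lemD hs.le
    nlinarith [Real.exp_pos s, sq_nonneg s]
  have h0 : (0:ℝ) ∈ Set.Ici (0:ℝ) := Set.self_mem_Ici
  have := hmono h0 (Set.mem_Ici.mpr ht) ht
  simp only [Real.exp_zero] at this
  nlinarith [this]

/-- **Product Taylor bounds**: if `|x_l| < 1` for each `l` and
`χ = Σ_l |x_l|/(1-|x_l|)`, then `|∏_l (1-x_l)⁻¹ - 1| ≤ χ e^χ` and
`|∏_l (1-x_l)⁻¹ - 1 - Σ_l x_l| ≤ (3/2) χ² e^χ`. -/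
theorem product_taylor_bounds (m : ℕ) (x : Fin m → ℝ) (hx : ∀ l, |x l| < 1) :
    |(∏ l, (1 - x l)⁻¹) - 1| ≤
      (∑ l, |x l| / (1 - |x l|)) * Real.exp (∑ l, |x l| / (1 - |x l|)) ∧
    |(∏ l, (1 - x l)⁻¹) - 1 - ∑ l, x l| ≤
      (3/2) * (∑ l, |x l| / (1 - |x l|))^2 * Real.exp (∑ l, |x l| / (1 - |x l|)) := by
  set a : Fin m → ℝ := fun l => x l / (1 - x l) with ha
  set y : Fin m → ℝ := fun l => |x l| / (1 - |x l|) with hy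
  have hx1 : ∀ l, 0 < 1 - |x l| := fun l => by linarith [hx l]
  have hx2 : ∀ l, 0 < 1 - x l := fun l => by
    have := abs_lt.mp (hx l); linarith [this.2]
  have hy0 : ∀ l, 0 ≤ y l := fun l =>
    div_nonneg (abs_nonneg _) (hx1 l).le
  have hay : ∀ l, |a l| ≤ y l := by
    intro l
    rw [ha, hy]
    simp only
    rw [abs_div, abs_of_pos (hx2 l)]
    apply div_le_div_of_nonneg_left (abs_nonneg _) (hx1 l)
    linarith [le_abs_self (x l)]
  have hinv : ∀ l, (1 - x l)⁻¹ = 1 + a l := by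
    intro l
    have hne : (1 - x l) ≠ 0 := (hx2 l).ne'
    rw [ha]
    field_simp
    ring
  have hprod : (∏ l, (1 - x l)⁻¹) = ∏ l, (1 + a l) :=
    Finset.prod_congr rfl fun l _ => hinv l
  set χ : ℝ := ∑ l, y l with hχ
  have hχ0 : 0 ≤ χ := Finset.sum_nonneg fun l _ => hy0 l
  have hE1 : (1:ℝ) ≤ Real.exp χ := Real.one_le_exp hχ0
  have hQ : ∏ l, (1 + y l) ≤ Real.exp χ := by
    rw [hχ, Real.exp_sum]
    exact Finset.prod_le_prod (fun l _ => by linarith [hy0 l])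
      (fun l _ => by linarith [Real.add_one_le_exp (y l)])
  constructor
  · rw [hprod]
    calc |(∏ l, (1 + a l)) - 1| ≤ ∏ l, (1 + y l) - 1 :=
          lemA Finset.univ a y (fun l _ => hay l)
      _ ≤ Real.exp χ - 1 := by linarith
      _ ≤ χ * Real.exp χ := lemD hχ0
  · -- Part (ii)
    have hdiffl : ∀ l, |a l - x l| ≤ y l ^ 2 := by
      intro l
      have heq : a l - x l = x l ^ 2 / (1 - x l) := by
        have hne : (1 - x l) ≠ 0 := (hx2 l).ne'
        rw [ha]; field_simp; ring
      rw [heq, abs_of_nonneg (div_nonneg (sq_nonneg _) (hx2 l).le)]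
      have hle : (1 - |x l|) ^ 2 ≤ 1 - x l := by
        nlinarith [abs_nonneg (x l), le_abs_self (x l), hx1 l, hx l]
      calc x l ^ 2 / (1 - x l) ≤ x l ^ 2 / (1 - |x l|) ^ 2 :=
            div_le_div_of_nonneg_left (sq_nonneg _) (pow_pos (hx1 l) 2) hle
        _ = y l ^ 2 := by rw [hy]; rw [div_pow, sq_abs]
    have hsumdiff : |(∑ l, a l) - ∑ l, x l| ≤ ∑ l, y l ^ 2 := by
      rw [← Finset.sum_sub_distrib]
      exact le_trans (Finset.abs_sum_le_sum_abs _ _)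
        (Finset.sum_le_sum fun l _ => hdiffl l)
    have hsumsq : ∑ l, y l ^ 2 ≤ χ ^ 2 := by
      have : ∀ l ∈ Finset.univ (α := Fin m), y l ^ 2 ≤ y l * χ := by
        intro l _
        have hl : y l ≤ χ := Finset.single_le_sum (fun j _ => hy0 j) (Finset.mem_univ l)
        nlinarith [hy0 l]
      calc ∑ l, y l ^ 2 ≤ ∑ l, y l * χ := Finset.sum_le_sum this
        _ = χ * χ := by rw [← Finset.sum_mul]
        _ = χ ^ 2 := (sq χ).symm
    have hmain : |(∏ l, (1 + a l)) - 1 - ∑ l, a l| ≤ Real.exp χ - 1 - χ := by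
      calc |(∏ l, (1 + a l)) - 1 - ∑ l, a l|
          ≤ ∏ l, (1 + y l) - 1 - ∑ l, y l :=
            lemB Finset.univ a y (fun l _ => hay l)
        _ ≤ Real.exp χ - 1 - χ := by rw [← hχ]; linarith
    rw [hprod]
    have htri : |(∏ l, (1 + a l)) - 1 - ∑ l, x l|
        ≤ |(∏ l, (1 + a l)) - 1 - ∑ l, a l| + |(∑ l, a l) - ∑ l, x l| := by
      have : (∏ l, (1 + a l)) - 1 - ∑ l, x l
          = ((∏ l, (1 + a l)) - 1 - ∑ l, a l) + ((∑ l, a l) - ∑ l, x l) := by ring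
      rw [this]; exact abs_add_le _ _
    have hlemE := lemE hχ0
    calc |(∏ l, (1 + a l)) - 1 - ∑ l, x l|
        ≤ (Real.exp χ - 1 - χ) + χ ^ 2 := by linarith
      _ ≤ χ ^ 2 / 2 * Real.exp χ + χ ^ 2 := by linarith
      _ ≤ 3 / 2 * χ ^ 2 * Real.exp χ := by nlinarith [sq_nonneg χ]
end
end
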